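/- Let k ≥ 2 and p ≥ 0 be integers. If there exists x ∈ LS+^p(H_k) with ∑_{v ∈ [k]_0 ∪ [k]_2} (k−1) x_v + ∑_{v ∈ [k]_1} (k−2) x_v > k(k−1), then there exist real numbers a, b such that w_k(a,b) ∈ LS+^p(H_k) and 2k(k−1)a + k(k−2)b > k(k−1). -/

import Mathlib

open Finset

noncomputable section

/-- `cone(P)`: the homogenization of `P`, indexed by `Option V` with `none` playing
the role of the `0` coordinate. -/
def lsCone {V : Type*} (P : Set (V → ℝ)) : Set (Option V → ℝ) :=
  {y | ∃ (lam : ℝ) (x : V → ℝ), 0 ≤ lam ∧ x ∈ P ∧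
    y = fun o => o.elim lam (fun v => lam * x v)}

/-- The lift `LŜ₊(P)`: symmetric PSD matrices `Y` indexed by `Option V`
with `Y e₀ = diag Y` and all columns conditions. -/
def lsLift {V : Type*} [Fintype V] [DecidableEq V] (P : Set (V → ℝ)) :
    Set (Matrix (Option V) (Option V) ℝ) :=
  {Y | Y.PosSemidef ∧ Y.mulVec (Pi.single none 1) = Matrix.diag Y ∧
      ∀ v : V, Y.mulVec (Pi.single (some v) 1) ∈ lsCone P ∧
        Y.mulVec (Pi.single none 1 - Pi.single (some v) 1) ∈ lsCone P}

/-- The Lovász–Schrijver operator `LS₊`. -/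
def lsPlus {V : Type*} [Fintype V] [DecidableEq V] (P : Set (V → ℝ)) : Set (V → ℝ) :=
  {x | ∃ Y ∈ lsLift P, Y.mulVec (Pi.single none 1) = fun o => o.elim 1 x}

/-- The fractional stable set polytope. -/
def FRAC {V : Type*} (G : SimpleGraph V) : Set (V → ℝ) :=
  {x | (∀ v, 0 ≤ x v ∧ x v ≤ 1) ∧ ∀ u v, G.Adj u v → x u + x v ≤ 1}

/-- The stable set polytope: convex hull of incidence vectors of stable sets. -/
def STAB {V : Type*} (G : SimpleGraph V) : Set (V → ℝ) :=
  convexHull ℝ {x | ∃ S : Set V, (∀ u ∈ S, ∀ v ∈ S, ¬ G.Adj u v) ∧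
    x = S.indicator fun _ => (1 : ℝ)}

/-- The graph `H_k`, on vertex set `Fin k × Fin 3` (vertex `i_p` is `(i, p)`). -/
def Hgraph (k : ℕ) : SimpleGraph (Fin k × Fin 3) :=
  SimpleGraph.fromRel (fun a b =>
    (a.1 = b.1 ∧ ((a.2 = 0 ∧ b.2 = 1) ∨ (a.2 = 1 ∧ b.2 = 2))) ∨
    (a.1 ≠ b.1 ∧ a.2 = 0 ∧ b.2 = 2))

/-- The vector `w_k(a,b)`: entry `a` on `[k]₀ ∪ [k]₂` and `b` on `[k]₁`. -/
def wVec (k : ℕ) (a b : ℝ) : Fin k × Fin 3 → ℝ := fun v => if v.2 = 1 then b else a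

/-! `LS₊` preserves convexity, since the lift is a convex cone, and it commutes with relabelling
coordinates by a graph automorphism, by conjugating the lift matrix with the permutation. So
`LS₊^p(H_k)` is convex and invariant under the rotations `i ↦ i + c` and the reflection exchanging
`[k]₀` and `[k]₂`. Averaging `x` over these symmetries gives `w_k(a, b)`, where `a` and `b` are the
mean entries of `x` on `[k]₀ ∪ [k]₂` and on `[k]₁`; the objective is invariant, so it takes the
same value there. -/

section Cone

variable {V : Type*} {P : Set (V → ℝ)}

lemma smul_mem_lsCone {c : ℝ} (hc : 0 ≤ c) {y : Option V → ℝ} (hy : y ∈ lsCone P) :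
    c • y ∈ lsCone P := by
  obtain ⟨l, x, hl, hx, rfl⟩ := hy
  refine ⟨c * l, x, mul_nonneg hc hl, hx, funext fun o => ?_⟩
  cases o <;> simp [mul_assoc]

lemma add_mem_lsCone (hP : Convex ℝ P) {y z : Option V → ℝ} (hy : y ∈ lsCone P)
    (hz : z ∈ lsCone P) : y + z ∈ lsCone P := by
  obtain ⟨l, x, hl, hx, rfl⟩ := hy
  obtain ⟨m, x', hm, hx', rfl⟩ := hz
  rcases (add_nonneg hl hm).eq_or_lt with hlm | hlm
  · obtain ⟨rfl, rfl⟩ : l = 0 ∧ m = 0 := ⟨by linarith, by linarith⟩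
    refine ⟨0, x, le_rfl, hx, funext fun o => ?_⟩
    cases o <;> simp
  · refine ⟨l + m, (l / (l + m)) • x + (m / (l + m)) • x', hlm.le,
      hP hx hx' (by positivity) (by positivity) (by field_simp), funext fun o => ?_⟩
    cases o with
    | none => rfl
    | some v =>
      simp only [Pi.add_apply, Option.elim_some, Pi.smul_apply, smul_eq_mul]
      field_simp

lemma comp_mem_lsCone (e : V ≃ V) (hP : ∀ x ∈ P, x ∘ e ∈ P) {y : Option V → ℝ}
    (hy : y ∈ lsCone P) : y ∘ e.optionCongr ∈ lsCone P := by
  obtain ⟨l, x, hl, hx, rfl⟩ := hy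
  refine ⟨l, x ∘ e, hl, hP x hx, funext fun o => ?_⟩
  cases o <;> simp

end Cone

section Lift

variable {V : Type*} [Fintype V] [DecidableEq V] {P : Set (V → ℝ)}

lemma smul_mem_lsLift {c : ℝ} (hc : 0 ≤ c) {Y : Matrix (Option V) (Option V) ℝ}
    (hY : Y ∈ lsLift P) : c • Y ∈ lsLift P := by
  obtain ⟨hpsd, hdiag, hcol⟩ := hY
  refine ⟨hpsd.smul hc, ?_, fun v => ?_⟩
  · rw [Matrix.smul_mulVec, hdiag]
    rfl
  · simp only [Matrix.smul_mulVec]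
    exact ⟨smul_mem_lsCone hc (hcol v).1, smul_mem_lsCone hc (hcol v).2⟩

lemma add_mem_lsLift (hP : Convex ℝ P) {Y Z : Matrix (Option V) (Option V) ℝ}
    (hY : Y ∈ lsLift P) (hZ : Z ∈ lsLift P) : Y + Z ∈ lsLift P := by
  obtain ⟨hpsdY, hdiagY, hcolY⟩ := hY
  obtain ⟨hpsdZ, hdiagZ, hcolZ⟩ := hZ
  refine ⟨hpsdY.add hpsdZ, ?_, fun v => ?_⟩
  · rw [Matrix.add_mulVec, hdiagY, hdiagZ]
    rfl
  · simp only [Matrix.add_mulVec]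
    exact ⟨add_mem_lsCone hP (hcolY v).1 (hcolZ v).1, add_mem_lsCone hP (hcolY v).2 (hcolZ v).2⟩

lemma convex_lsPlus (hP : Convex ℝ P) : Convex ℝ (lsPlus P) := by
  rintro x ⟨Y, hY, hYx⟩ x' ⟨Z, hZ, hZx⟩ a b ha hb hab
  refine ⟨a • Y + b • Z, add_mem_lsLift hP (smul_mem_lsLift ha hY) (smul_mem_lsLift hb hZ), ?_⟩
  rw [Matrix.add_mulVec, Matrix.smul_mulVec, Matrix.smul_mulVec, hYx, hZx]
  funext o
  cases o <;> simp [hab]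

lemma comp_mem_lsPlus (e : V ≃ V) (hP : ∀ x ∈ P, x ∘ e ∈ P) {x : V → ℝ} (hx : x ∈ lsPlus P) :
    x ∘ e ∈ lsPlus P := by
  obtain ⟨Y, ⟨hpsd, hdiag, hcol⟩, hYx⟩ := hx
  have hsingle : ∀ o, (Pi.single o (1 : ℝ)) ∘ e.optionCongr.symm = Pi.single (e.optionCongr o) 1 :=
    fun o => Function.update_comp_equiv (0 : Option V → ℝ) e.optionCongr.symm o 1
  refine ⟨Y.submatrix e.optionCongr e.optionCongr, ⟨hpsd.submatrix _, ?_, fun v => ⟨?_, ?_⟩⟩, ?_⟩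
  · rw [Matrix.submatrix_mulVec_equiv, hsingle]
    simp only [Equiv.optionCongr_apply, Option.map_none, hdiag]
    rfl
  · rw [Matrix.submatrix_mulVec_equiv, hsingle]
    exact comp_mem_lsCone e hP (hcol (e v)).1
  · rw [Matrix.submatrix_mulVec_equiv, Pi.sub_comp, hsingle, hsingle]
    exact comp_mem_lsCone e hP (hcol (e v)).2
  · rw [Matrix.submatrix_mulVec_equiv, hsingle]
    simp only [Equiv.optionCongr_apply, Option.map_none, hYx]
    funext o
    cases o <;> rfl

end Lift

section StableSet

variable {V : Type*} {G : SimpleGraph V}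

lemma convex_FRAC : Convex ℝ (FRAC G) := by
  rintro x ⟨hx, hxG⟩ y ⟨hy, hyG⟩ a b ha hb hab
  refine ⟨fun v => ⟨?_, ?_⟩, fun u v huv => ?_⟩ <;>
    simp only [Pi.add_apply, Pi.smul_apply, smul_eq_mul]
  · nlinarith [(hx v).1, (hy v).1]
  · nlinarith [(hx v).2, (hy v).2]
  · nlinarith [hxG u v huv, hyG u v huv]

lemma comp_mem_FRAC (e : G ≃g G) {x : V → ℝ} (hx : x ∈ FRAC G) : x ∘ e ∈ FRAC G :=
  ⟨fun v => hx.1 (e v), fun u v huv => hx.2 (e u) (e v) (e.map_adj_iff.mpr huv)⟩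

variable [Fintype V] [DecidableEq V]

lemma convex_iterate_lsPlus_FRAC (p : ℕ) : Convex ℝ ((lsPlus (V := V))^[p] (FRAC G)) := by
  induction p with
  | zero => exact convex_FRAC
  | succ p ih => rw [Function.iterate_succ_apply']; exact convex_lsPlus ih

lemma comp_mem_iterate_lsPlus_FRAC (e : G ≃g G) {p : ℕ} {x : V → ℝ}
    (hx : x ∈ (lsPlus (V := V))^[p] (FRAC G)) : x ∘ e ∈ (lsPlus (V := V))^[p] (FRAC G) := by
  induction p generalizing x with
  | zero => exact comp_mem_FRAC e hx
  | succ p ih =>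
    rw [Function.iterate_succ_apply'] at hx ⊢
    exact comp_mem_lsPlus e.toEquiv (fun y hy => ih hy) hx

end StableSet

namespace Hgraph

variable {k : ℕ}

def rotate [NeZero k] (c : Fin k) : Hgraph k ≃g Hgraph k where
  toEquiv := (Equiv.addRight c).prodCongr (Equiv.refl _)
  map_rel_iff' := by simp [Hgraph, Prod.ext_iff, eq_comm]

def reflect : Hgraph k ≃g Hgraph k where
  toEquiv := (Equiv.refl _).prodCongr Fin.revPerm
  map_rel_iff' := by
    rintro ⟨i, p⟩ ⟨j, q⟩
    fin_cases p <;> fin_cases q <;> simp [Hgraph, Prod.ext_iff, eq_comm]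

end Hgraph

section Symmetrization

variable {k : ℕ} [NeZero k] {C : Set (Fin k × Fin 3 → ℝ)}

lemma layer_average_mem (hC : Convex ℝ C) (hinv : ∀ e : Hgraph k ≃g Hgraph k, ∀ y ∈ C, y ∘ e ∈ C)
    {x : Fin k × Fin 3 → ℝ} (hx : x ∈ C) : (fun v => (∑ j, x (j, v.2)) / k) ∈ C := by
  convert hC.sum_mem (t := univ) (w := fun _ => (k : ℝ)⁻¹) (fun _ _ => by positivity)
    (by simp) (fun c _ => hinv (Hgraph.rotate c) x hx) using 1
  funext ⟨i, q⟩
  simp only [Finset.sum_apply, Pi.smul_apply, smul_eq_mul, ← mul_sum]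
  rw [← Equiv.sum_comp (Equiv.addLeft i)]
  simp [Hgraph.rotate, div_eq_inv_mul]

lemma wVec_mem_of_convex_of_invariant (hC : Convex ℝ C)
    (hinv : ∀ e : Hgraph k ≃g Hgraph k, ∀ y ∈ C, y ∘ e ∈ C) {x : Fin k × Fin 3 → ℝ} (hx : x ∈ C) :
    wVec k ((∑ j, (x (j, 0) + x (j, 2))) / (2 * k)) ((∑ j, x (j, 1)) / k) ∈ C := by
  have hy := layer_average_mem hC hinv hx
  convert hC hy (hinv Hgraph.reflect _ hy) (by norm_num : (0 : ℝ) ≤ 1 / 2)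
    (by norm_num : (0 : ℝ) ≤ 1 / 2) (by norm_num) using 1
  funext ⟨i, q⟩
  fin_cases q <;>
    simp only [wVec, Hgraph.reflect, RelIso.coe_fn_mk, Equiv.prodCongr_apply, Equiv.coe_refl,
      Prod.map_apply, id_eq, Fin.revPerm_apply, Function.comp_apply, Pi.add_apply, Pi.smul_apply,
      smul_eq_mul, Fin.isValue, Fin.reduceFinMk, Fin.mk_one, Fin.zero_eta, Fin.reduceRev, Fin.rev_zero,
      Fin.reduceLast, Fin.reduceEq, zero_ne_one, ↓reduceIte, sum_add_distrib] <;>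
    ring

end Symmetrization

theorem Hk_symmetrize_violation (k : ℕ) (hk : 2 ≤ k) (p : ℕ)
    (x : Fin k × Fin 3 → ℝ)
    (hx : x ∈ (lsPlus (V := Fin k × Fin 3))^[p] (FRAC (Hgraph k)))
    (hviol : (k : ℝ) * ((k : ℝ) - 1) <
      ∑ v : Fin k × Fin 3, (if v.2 = 1 then (k : ℝ) - 2 else (k : ℝ) - 1) * x v) :
    ∃ a b : ℝ, wVec k a b ∈ (lsPlus (V := Fin k × Fin 3))^[p] (FRAC (Hgraph k)) ∧
      (k : ℝ) * ((k : ℝ) - 1) < 2 * k * ((k : ℝ) - 1) * a + (k : ℝ) * ((k : ℝ) - 2) * b := by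
  have : NeZero k := ⟨by omega⟩
  set A := ∑ j : Fin k, (x (j, 0) + x (j, 2))
  set B := ∑ j : Fin k, x (j, 1)
  refine ⟨A / (2 * k), B / k, wVec_mem_of_convex_of_invariant (convex_iterate_lsPlus_FRAC p)
    (fun e _ hy => comp_mem_iterate_lsPlus_FRAC e hy) hx, ?_⟩
  have hobj : ∑ v : Fin k × Fin 3, (if v.2 = 1 then (k : ℝ) - 2 else (k : ℝ) - 1) * x v
      = ((k : ℝ) - 1) * A + ((k : ℝ) - 2) * B := by
    simp only [ite_mul, Fintype.sum_prod_type, Fin.sum_univ_three, Fin.isValue, zero_ne_one,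
      Fin.reduceEq, ↓reduceIte, sum_add_distrib, ← mul_sum, A, B]
    ring
  calc (k : ℝ) * ((k : ℝ) - 1) < ((k : ℝ) - 1) * A + ((k : ℝ) - 2) * B := hobj ▸ hviol
    _ = 2 * k * ((k : ℝ) - 1) * (A / (2 * k)) + (k : ℝ) * ((k : ℝ) - 2) * (B / k) := by
      field_simp
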